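/- arXiv:1910.06354 — 5 statements merged into one kernel-verified Lean document; each statement's English description precedes it below -/
import Mathlib

section
/- Let n be a positive integer, L = 4n+1, and define E(φ) = E↑(φ)+E↓(φ) with E↑(φ) = -2cos(φ/L) - 2∑_{l=1}^{n}cos((2lπ-φ)/L) - 2∑_{l=1}^{n}cos((2lπ+φ)/L) and E↓(φ) = -2cos(φ/L) - 2∑_{l=1}^{n}cos((2lπ-φ)/L) - 2∑_{l=1}^{n-1}cos((2lπ+φ)/L). Then the derivative of E with respect to φ vanishes at φ = π/2. -/
open Real Finset

lemma two_sin_mul_sin (x b : ℝ) :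
    Real.cos (b - x) - Real.cos (b + x) = 2 * Real.sin x * Real.sin b := by
  rw [Real.cos_sub, Real.cos_add]; ring

lemma tele (x a : ℝ) (m : ℕ) :
    2 * Real.sin x * ∑ l ∈ Finset.Icc 1 m, Real.sin (a + 2 * l * x)
      = Real.cos (a + x) - Real.cos (a + (2 * m + 1) * x) := by
  induction m with
  | zero => simp
  | succ k ih =>
    rw [Finset.sum_Icc_succ_top (Nat.le_add_left 1 k), mul_add]
    have h : Real.cos (a + (2*(k:ℝ)+1)*x) - Real.cos (a + (2*(k:ℝ)+3)*x)
        = 2 * Real.sin x * Real.sin (a + 2*((k:ℝ)+1)*x) := by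
      rw [show a + (2*(k:ℝ)+1)*x = (a + 2*((k:ℝ)+1)*x) - x by ring,
          show a + (2*(k:ℝ)+3)*x = (a + 2*((k:ℝ)+1)*x) + x by ring,
          two_sin_mul_sin]
    push_cast
    push_cast at ih
    rw [show a + (2*((k:ℝ)+1)+1)*x = a + (2*(k:ℝ)+3)*x by ring]
    linear_combination ih - h

lemma trig (t : ℝ) :
    4 * Real.sin (2*t) * Real.sin t - 2 * Real.cos t + 2 * Real.cos (3*t) = 0 := by
  rw [Real.sin_two_mul, Real.cos_three_mul]
  linear_combination 8 * Real.cos t * (Real.sin_sq_add_cos_sq t)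

theorem stmt_2 (n : ℕ) (hn : 0 < n) (L : ℝ) (hL : L = 4 * n + 1) :
    deriv (fun φ : ℝ =>
      ((-2) * Real.cos (φ / L)
        - 2 * ∑ l ∈ Finset.Icc 1 n, Real.cos ((2 * l * π - φ) / L)
        - 2 * ∑ l ∈ Finset.Icc 1 n, Real.cos ((2 * l * π + φ) / L))
      +
      ((-2) * Real.cos (φ / L)
        - 2 * ∑ l ∈ Finset.Icc 1 n, Real.cos ((2 * l * π - φ) / L)
        - 2 * ∑ l ∈ Finset.Icc 1 (n - 1), Real.cos ((2 * l * π + φ) / L)))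
      (π / 2) = 0 := by
  have hn1 : (1:ℝ) ≤ (n:ℝ) := by exact_mod_cast hn
  have hL0 : L ≠ 0 := by rw [hL]; positivity
  have hL5 : (5:ℝ) ≤ L := by rw [hL]; linarith
  -- derivative pieces
  have h1 : HasDerivAt (fun φ : ℝ => Real.cos (φ / L))
      (-Real.sin (π/2 / L) * (1/L)) (π/2) :=
    ((hasDerivAt_id (π/2 : ℝ)).div_const L).cos
  have hminus : ∀ l : ℕ, HasDerivAt (fun φ : ℝ => Real.cos ((2 * l * π - φ) / L))
      (-Real.sin ((2 * l * π - π/2) / L) * (-1/L)) (π/2) := fun l =>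
    (((hasDerivAt_id (π/2 : ℝ)).const_sub (2 * l * π)).div_const L).cos
  have hplus : ∀ l : ℕ, HasDerivAt (fun φ : ℝ => Real.cos ((2 * l * π + φ) / L))
      (-Real.sin ((2 * l * π + π/2) / L) * (1/L)) (π/2) := fun l =>
    (((hasDerivAt_id (π/2 : ℝ)).const_add (2 * l * π)).div_const L).cos
  have hsm : ∀ m : ℕ, HasDerivAt (fun φ : ℝ => ∑ l ∈ Finset.Icc 1 m, Real.cos ((2 * l * π - φ) / L))
      (∑ l ∈ Finset.Icc 1 m, (-Real.sin ((2 * l * π - π/2) / L) * (-1/L))) (π/2) := fun m =>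
    HasDerivAt.fun_sum (fun l _ => hminus l)
  have hsp : ∀ m : ℕ, HasDerivAt (fun φ : ℝ => ∑ l ∈ Finset.Icc 1 m, Real.cos ((2 * l * π + φ) / L))
      (∑ l ∈ Finset.Icc 1 m, (-Real.sin ((2 * l * π + π/2) / L) * (1/L))) (π/2) := fun m =>
    HasDerivAt.fun_sum (fun l _ => hplus l)
  have hd : HasDerivAt (fun φ : ℝ =>
      ((-2) * Real.cos (φ / L)
        - 2 * ∑ l ∈ Finset.Icc 1 n, Real.cos ((2 * l * π - φ) / L)
        - 2 * ∑ l ∈ Finset.Icc 1 n, Real.cos ((2 * l * π + φ) / L))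
      +
      ((-2) * Real.cos (φ / L)
        - 2 * ∑ l ∈ Finset.Icc 1 n, Real.cos ((2 * l * π - φ) / L)
        - 2 * ∑ l ∈ Finset.Icc 1 (n - 1), Real.cos ((2 * l * π + φ) / L)))
      (((-2) * (-Real.sin (π/2 / L) * (1/L))
        - 2 * ∑ l ∈ Finset.Icc 1 n, (-Real.sin ((2 * l * π - π/2) / L) * (-1/L))
        - 2 * ∑ l ∈ Finset.Icc 1 n, (-Real.sin ((2 * l * π + π/2) / L) * (1/L)))
      +
      ((-2) * (-Real.sin (π/2 / L) * (1/L))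
        - 2 * ∑ l ∈ Finset.Icc 1 n, (-Real.sin ((2 * l * π - π/2) / L) * (-1/L))
        - 2 * ∑ l ∈ Finset.Icc 1 (n - 1), (-Real.sin ((2 * l * π + π/2) / L) * (1/L))))
      (π/2) :=
    (((h1.const_mul (-2)).sub ((hsm n).const_mul 2)).sub ((hsp n).const_mul 2)).add
      (((h1.const_mul (-2)).sub ((hsm n).const_mul 2)).sub ((hsp (n-1)).const_mul 2))
  rw [hd.deriv]
  -- now pure algebra/trig
  set t : ℝ := π / (2 * L) with ht
  have hA : ∑ l ∈ Finset.Icc 1 n, (-Real.sin ((2 * l * π - π/2) / L) * (-1/L))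
      = (∑ l ∈ Finset.Icc 1 n, Real.sin (-t + 2 * l * (π/L))) * (1/L) := by
    rw [Finset.sum_mul]
    refine Finset.sum_congr rfl fun l _ => ?_
    rw [show (2 * (l:ℝ) * π - π/2) / L = -t + 2 * l * (π/L) by rw [ht]; field_simp; ring]
    ring
  have hB : ∀ m : ℕ, ∑ l ∈ Finset.Icc 1 m, (-Real.sin ((2 * l * π + π/2) / L) * (1/L))
      = -((∑ l ∈ Finset.Icc 1 m, Real.sin (t + 2 * l * (π/L))) * (1/L)) := by
    intro m
    rw [Finset.sum_mul, ← Finset.sum_neg_distrib]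
    refine Finset.sum_congr rfl fun l _ => ?_
    rw [show (2 * (l:ℝ) * π + π/2) / L = t + 2 * l * (π/L) by rw [ht]; field_simp; ring]
    ring
  have hpt : π/2/L = t := by rw [ht, div_div]
  rw [hA, hB n, hB (n-1), hpt]
  have h4 : (4*(n:ℝ)+1) ≠ 0 := by positivity
  have e1 : -t + π/L = t := by rw [ht]; field_simp; ring
  have e2 : -t + (2*(n:ℝ)+1)*(π/L) = π/2 := by rw [ht, hL]; field_simp; ring
  have e3 : t + π/L = 3*t := by rw [ht]; field_simp; ring
  have e4 : t + (2*(n:ℝ)+1)*(π/L) = 2*t + π/2 := by rw [ht, hL]; field_simp; ring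
  have e5 : t + (2*((n - 1 : ℕ) : ℝ)+1)*(π/L) = π/2 - 2*t := by
    rw [Nat.cast_sub hn, ht, hL]; field_simp; ring
  have hs2 : π/L = 2*t := by rw [ht]; field_simp
  have htA' : 2*Real.sin (π/L) * (∑ l ∈ Finset.Icc 1 n, Real.sin (-t + 2 * l * (π/L)))
      = Real.cos t := by
    have h := tele (π/L) (-t) n
    rw [e1, e2, Real.cos_pi_div_two, sub_zero] at h
    exact h
  have htB' : 2*Real.sin (π/L) * (∑ l ∈ Finset.Icc 1 n, Real.sin (t + 2 * l * (π/L)))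
      = Real.cos (3*t) + Real.sin (2*t) := by
    have h := tele (π/L) t n
    rw [e3, e4, Real.cos_add_pi_div_two, sub_neg_eq_add] at h
    exact h
  have htC' : 2*Real.sin (π/L) * (∑ l ∈ Finset.Icc 1 (n-1), Real.sin (t + 2 * l * (π/L)))
      = Real.cos (3*t) - Real.sin (2*t) := by
    have h := tele (π/L) t (n-1)
    rw [e3, e5, Real.cos_pi_div_two_sub] at h
    exact h
  have hsin : Real.sin (π/L) ≠ 0 := by
    refine ne_of_gt (Real.sin_pos_of_pos_of_lt_pi ?_ ?_)
    · exact div_pos Real.pi_pos (by linarith)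
    · exact div_lt_self Real.pi_pos (by linarith)
  have htrig : 4 * Real.sin (π/L) * Real.sin t - 2 * Real.cos t + 2 * Real.cos (3*t) = 0 := by
    rw [hs2]; exact trig t
  have hz : 2*Real.sin (π/L) * (2*Real.sin t
      - 2*(∑ l ∈ Finset.Icc 1 n, Real.sin (-t + 2 * l * (π/L)))
      + (∑ l ∈ Finset.Icc 1 n, Real.sin (t + 2 * l * (π/L)))
      + (∑ l ∈ Finset.Icc 1 (n-1), Real.sin (t + 2 * l * (π/L)))) = 0 := by
    linear_combination (-2)*htA' + htB' + htC' + htrig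
  have key : 2*Real.sin t
      - 2*(∑ l ∈ Finset.Icc 1 n, Real.sin (-t + 2 * l * (π/L)))
      + (∑ l ∈ Finset.Icc 1 n, Real.sin (t + 2 * l * (π/L)))
      + (∑ l ∈ Finset.Icc 1 (n-1), Real.sin (t + 2 * l * (π/L))) = 0 := by
    rcases mul_eq_zero.mp hz with h | h
    · exact absurd (by linarith : Real.sin (π/L) = 0) hsin
    · exact h
  linear_combination (2/L) * key
end

section
/- Let n be a positive integer, L = 4n+3, and define E(φ) = E↑(φ)+E↓(φ) with E↑(φ) = -2cos(φ/L) - 2∑_{l=1}^{n+1}cos((2lπ-φ)/L) - 2∑_{l=1}^{n}cos((2lπ+φ)/L) and E↓(φ) = -2cos(φ/L) - 2∑_{l=1}^{n}cos((2lπ-φ)/L) - 2∑_{l=1}^{n}cos((2lπ+φ)/L). Then the derivative of E with respect to φ vanishes at φ = π/2. -/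
/-!
Put `θ = π / (2L)`. The derivative of each filling energy at `φ = π/2` is a sum of `sin ((4l ± 1) θ)`,
and multiplying the difference `∑ (sin ((4l+1)θ) - sin ((4l-1)θ))` by `2 cos θ` makes it telescope
to `sin ((4n+2)θ) - sin (2θ) = cos θ - sin (2θ)`, because `(4n+3)θ = π/2`. Hence that difference is
`1/2 - sin θ`, and the extra spin-up term `sin ((4n+3)θ) = 1` exactly cancels what is left.
-/

open Real Finset

/-- Filling energy of the momenta `2πk/L`, `-p ≤ k ≤ q`: `E↑ = ringEnergy L (n+1) n`,
`E↓ = ringEnergy L n n`. -/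
noncomputable def ringEnergy (L : ℝ) (p q : ℕ) (φ : ℝ) : ℝ :=
  -2 * cos (φ / L) - 2 * ∑ l ∈ Icc 1 p, cos ((2 * l * π - φ) / L)
    - 2 * ∑ l ∈ Icc 1 q, cos ((2 * l * π + φ) / L)

theorem hasDerivAt_ringEnergy (L : ℝ) (p q : ℕ) (φ : ℝ) :
    HasDerivAt (ringEnergy L p q)
      (2 / L * (sin (φ / L) - ∑ l ∈ Icc 1 p, sin ((2 * l * π - φ) / L)
        + ∑ l ∈ Icc 1 q, sin ((2 * l * π + φ) / L))) φ := by
  have hzero : HasDerivAt (fun φ : ℝ => cos (φ / L)) (-sin (φ / L) * (1 / L)) φ :=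
    (hasDerivAt_cos _).comp _ ((hasDerivAt_id φ).div_const L)
  have hminus : HasDerivAt (fun φ : ℝ => ∑ l ∈ Icc 1 p, cos ((2 * l * π - φ) / L))
      (∑ l ∈ Icc 1 p, -sin ((2 * l * π - φ) / L) * ((0 - 1) / L)) φ :=
    .fun_sum fun l _ => (hasDerivAt_cos _).comp _
      (((hasDerivAt_const φ _).sub (hasDerivAt_id φ)).div_const L)
  have hplus : HasDerivAt (fun φ : ℝ => ∑ l ∈ Icc 1 q, cos ((2 * l * π + φ) / L))
      (∑ l ∈ Icc 1 q, -sin ((2 * l * π + φ) / L) * ((0 + 1) / L)) φ :=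
    .fun_sum fun l _ => (hasDerivAt_cos _).comp _
      (((hasDerivAt_const φ _).add (hasDerivAt_id φ)).div_const L)
  refine (((hzero.const_mul (-2)).fun_sub (hminus.const_mul 2)).fun_sub
    (hplus.const_mul 2)).congr_deriv ?_
  simp only [← Finset.sum_mul, Finset.sum_neg_distrib]
  ring

theorem two_mul_cos_mul_sum_sin_sub_sin (θ : ℝ) (n : ℕ) :
    2 * cos θ * ∑ l ∈ Icc 1 n, (sin ((4 * l + 1) * θ) - sin ((4 * l - 1) * θ))
      = sin ((4 * n + 2) * θ) - sin (2 * θ) := by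
  induction n with
  | zero => simp
  | succ n ih =>
    have hstep : 2 * cos θ * (sin ((4 * (n + 1 : ℝ) + 1) * θ) - sin ((4 * (n + 1 : ℝ) - 1) * θ))
        = sin ((4 * (n + 1 : ℝ) + 2) * θ) - sin ((4 * n + 2) * θ) := by
      rw [mul_sub, mul_right_comm, mul_right_comm _ (cos θ), two_mul_sin_mul_cos,
        two_mul_sin_mul_cos]
      ring_nf
    rw [sum_Icc_succ_top (Nat.le_add_left 1 n), mul_add, ih]
    push_cast
    linarith

theorem sum_sin_sub_sin_of_mul_eq_pi_div_two {θ : ℝ} {n : ℕ} (hθ : (4 * n + 3) * θ = π / 2) :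
    ∑ l ∈ Icc 1 n, (sin ((4 * l + 1) * θ) - sin ((4 * l - 1) * θ)) = 1 / 2 - sin θ := by
  have hcos : 0 < cos θ := by
    apply cos_pos_of_mem_Ioo
    constructor <;> nlinarith [pi_pos, (n.cast_nonneg : (0 : ℝ) ≤ n)]
  have htop : sin ((4 * n + 2) * θ) = cos θ := by
    rw [← sin_pi_div_two_sub]; congr 1; linarith
  have h := two_mul_cos_mul_sum_sin_sub_sin θ n
  rw [htop, sin_two_mul] at h
  apply mul_left_cancel₀ (by positivity : 2 * cos θ ≠ 0)
  linear_combination h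

theorem stmt_3_general (n : ℕ) (L : ℝ) (hL : L = 4 * n + 3) :
    deriv (fun φ : ℝ =>
      ((-2) * Real.cos (φ / L)
        - 2 * ∑ l ∈ Finset.Icc 1 (n + 1), Real.cos ((2 * l * π - φ) / L)
        - 2 * ∑ l ∈ Finset.Icc 1 n, Real.cos ((2 * l * π + φ) / L))
      +
      ((-2) * Real.cos (φ / L)
        - 2 * ∑ l ∈ Finset.Icc 1 n, Real.cos ((2 * l * π - φ) / L)
        - 2 * ∑ l ∈ Finset.Icc 1 n, Real.cos ((2 * l * π + φ) / L)))
      (π / 2) = 0 := by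
  change deriv (fun φ => ringEnergy L (n + 1) n φ + ringEnergy L n n φ) (π / 2) = 0
  rw [((hasDerivAt_ringEnergy L (n + 1) n _).fun_add (hasDerivAt_ringEnergy L n n _)).deriv,
    sum_Icc_succ_top (Nat.le_add_left 1 n)]
  set θ := π / (2 * L) with hθdef
  have hLpos : 0 < L := by rw [hL]; positivity
  have hθ : (4 * n + 3) * θ = π / 2 := by rw [← hL, hθdef]; field_simp
  have hminus (l : ℕ) : (2 * l * π - π / 2) / L = (4 * l - 1) * θ := by rw [hθdef]; field_simp; ring
  have hplus (l : ℕ) : (2 * l * π + π / 2) / L = (4 * l + 1) * θ := by rw [hθdef]; field_simp; ring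
  have hlast : sin ((4 * ((n + 1 : ℕ) : ℝ) - 1) * θ) = 1 := by
    push_cast; rw [show (4 * ((n : ℝ) + 1) - 1) * θ = π / 2 by linarith, sin_pi_div_two]
  have hdiff := sum_sin_sub_sin_of_mul_eq_pi_div_two hθ
  rw [sum_sub_distrib] at hdiff
  rw [show π / 2 / L = θ by ring]
  simp only [hminus, hplus, hlast]
  linear_combination (4 / L) * hdiff

theorem stmt_3 (n : ℕ) (hn : 0 < n) (L : ℝ) (hL : L = 4 * n + 3) :
    deriv (fun φ : ℝ =>
      ((-2) * Real.cos (φ / L)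
        - 2 * ∑ l ∈ Finset.Icc 1 (n + 1), Real.cos ((2 * l * π - φ) / L)
        - 2 * ∑ l ∈ Finset.Icc 1 n, Real.cos ((2 * l * π + φ) / L))
      +
      ((-2) * Real.cos (φ / L)
        - 2 * ∑ l ∈ Finset.Icc 1 n, Real.cos ((2 * l * π - φ) / L)
        - 2 * ∑ l ∈ Finset.Icc 1 n, Real.cos ((2 * l * π + φ) / L)))
      (π / 2) = 0 :=
  stmt_3_general n L hL
end

section
/- For every positive integer n and L = 4n+1, the equation 2sin(φ/L) − 2∑_{l=1}^{n} sin((2lπ−φ)/L) + 2∑_{l=1}^{n} sin((2lπ+φ)/L) − sin((2nπ+φ)/L) = 0 holds at φ = π/2. -/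
open Real Finset

theorem stmt_4 (n : ℕ) (hn : 0 < n) (L : ℝ) (hL : L = 4 * n + 1) :
    2 * Real.sin ((π / 2) / L)
      - 2 * ∑ l ∈ Finset.Icc 1 n, Real.sin ((2 * l * π - π / 2) / L)
      + 2 * ∑ l ∈ Finset.Icc 1 n, Real.sin ((2 * l * π + π / 2) / L)
      - Real.sin ((2 * n * π + π / 2) / L) = 0 := by
  have hn1 : (1:ℝ) ≤ n := by exact_mod_cast hn
  have hL0 : (0:ℝ) < L := by nlinarith
  have hLne : L ≠ 0 := ne_of_gt hL0
  have hL1 : (1:ℝ) < L := by nlinarith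
  set α : ℝ := π / (2 * L) with hα
  have hαeq : (π / 2) / L = α := by rw [hα]; ring
  -- last term equals 1
  have hlast : Real.sin ((2 * n * π + π / 2) / L) = 1 := by
    have h : (2 * (n:ℝ) * π + π / 2) / L = π / 2 := by
      rw [hL]; field_simp; ring
    rw [h, Real.sin_pi_div_two]
  -- combined summand
  have hcomb : ∀ l : ℕ,
      Real.sin ((2 * l * π + π / 2) / L) - Real.sin ((2 * l * π - π / 2) / L)
        = 2 * Real.sin α * Real.cos (2 * l * π / L) := by
    intro l
    have h1 : ((2 * (l:ℝ) * π + π / 2) / L - (2 * l * π - π / 2) / L) / 2 = α := by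
      rw [hα]; field_simp; ring
    have h2 : ((2 * (l:ℝ) * π + π / 2) / L + (2 * l * π - π / 2) / L) / 2
        = 2 * l * π / L := by
      field_simp; ring
    rw [Real.sin_sub_sin, h1, h2]
  have hcos : Real.cos α ≠ 0 := by
    have h1 : 0 < α := by positivity
    have h2 : α < π / 2 := by
      rw [hα]
      rw [div_lt_div_iff₀ (by linarith) (by norm_num)]
      nlinarith [Real.pi_pos]
    exact ne_of_gt (Real.cos_pos_of_mem_Ioo ⟨by linarith, h2⟩)
  have h2α : Real.sin (2 * α) = Real.sin (π / L) := by
    congr 1; rw [hα]; field_simp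
  -- key identity
  have key : 2 * Real.sin α
      + 2 * ∑ l ∈ Finset.Icc 1 n, (2 * Real.sin α * Real.cos (2 * l * π / L)) = 1 := by
    apply mul_right_cancel₀ hcos
    have hterm : ∀ l : ℕ, (2 * (2 * Real.sin α * Real.cos (2 * l * π / L))) * Real.cos α
        = Real.sin ((2 * (l:ℝ) + 1) * π / L) - Real.sin ((2 * (l:ℝ) - 1) * π / L) := by
      intro l
      have h1 : ((2 * (l:ℝ) + 1) * π / L - (2 * (l:ℝ) - 1) * π / L) / 2 = 2 * α := by
        rw [hα]; field_simp; ring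
      have h2 : ((2 * (l:ℝ) + 1) * π / L + (2 * (l:ℝ) - 1) * π / L) / 2
          = 2 * l * π / L := by field_simp; ring
      rw [Real.sin_sub_sin, h1, h2, Real.sin_two_mul]
      ring
    have htel : ∑ l ∈ Finset.Icc 1 n,
        (Real.sin ((2 * (l:ℝ) + 1) * π / L) - Real.sin ((2 * (l:ℝ) - 1) * π / L))
        = Real.sin ((2 * (n:ℝ) + 1) * π / L) - Real.sin (π / L) := by
      rw [← Finset.Ico_add_one_right_eq_Icc, Finset.sum_Ico_eq_sum_range]
      have h : ∀ i ∈ Finset.range (n + 1 - 1),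
          Real.sin ((2 * ((1 + i : ℕ):ℝ) + 1) * π / L)
            - Real.sin ((2 * ((1 + i : ℕ):ℝ) - 1) * π / L)
          = (fun k : ℕ => Real.sin ((2 * (k:ℝ) + 1) * π / L)) (i + 1)
            - (fun k : ℕ => Real.sin ((2 * (k:ℝ) + 1) * π / L)) i := by
        intro i _
        push_cast
        ring_nf
      rw [Finset.sum_congr rfl h, Finset.sum_range_sub
        (fun k : ℕ => Real.sin ((2 * (k:ℝ) + 1) * π / L))]
      simp
    have hfin : Real.sin ((2 * (n:ℝ) + 1) * π / L) = Real.cos α := by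
      have harg : (2 * (n:ℝ) + 1) * π / L = α + π / 2 := by
        rw [hα, hL]; field_simp; ring
      rw [harg, Real.sin_add_pi_div_two]
    calc (2 * Real.sin α
        + 2 * ∑ l ∈ Finset.Icc 1 n, (2 * Real.sin α * Real.cos (2 * l * π / L))) * Real.cos α
        = Real.sin (2 * α)
          + ∑ l ∈ Finset.Icc 1 n,
              ((2 * (2 * Real.sin α * Real.cos (2 * l * π / L))) * Real.cos α) := by
          rw [Real.sin_two_mul, Finset.mul_sum, add_mul, Finset.sum_mul]
      _ = Real.sin (π / L) + ∑ l ∈ Finset.Icc 1 n,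
              (Real.sin ((2 * (l:ℝ) + 1) * π / L) - Real.sin ((2 * (l:ℝ) - 1) * π / L)) := by
          rw [h2α, Finset.sum_congr rfl (fun l _ => hterm l)]
      _ = Real.sin (π / L) + (Real.sin ((2 * (n:ℝ) + 1) * π / L) - Real.sin (π / L)) := by
          rw [htel]
      _ = 1 * Real.cos α := by rw [hfin]; ring
  have hsum : (∑ l ∈ Finset.Icc 1 n, Real.sin ((2 * l * π + π / 2) / L))
      - (∑ l ∈ Finset.Icc 1 n, Real.sin ((2 * l * π - π / 2) / L))
      = ∑ l ∈ Finset.Icc 1 n, (2 * Real.sin α * Real.cos (2 * l * π / L)) := by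
    rw [← Finset.sum_sub_distrib]
    exact Finset.sum_congr rfl (fun l _ => hcomb l)
  rw [hlast, hαeq]
  linarith [key, hsum]
end

section
/- For every positive integer n and L = 4n+3, the equation 2sin(φ/L) − 2∑_{l=1}^{n} sin((2lπ−φ)/L) + 2∑_{l=1}^{n} sin((2lπ+φ)/L) − sin((2(n+1)π−φ)/L) = 0 holds at φ = π/2. -/
open Real Finset

theorem stmt_5 (n : ℕ) (hn : 0 < n) (L : ℝ) (hL : L = 4 * n + 3) :
    2 * Real.sin ((π / 2) / L)
      - 2 * ∑ l ∈ Finset.Icc 1 n, Real.sin ((2 * l * π - π / 2) / L)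
      + 2 * ∑ l ∈ Finset.Icc 1 n, Real.sin ((2 * l * π + π / 2) / L)
      - Real.sin ((2 * (n + 1) * π - π / 2) / L) = 0 := by
  have hn1 : (1:ℝ) ≤ (n:ℝ) := by exact_mod_cast hn
  have hL7 : (7:ℝ) ≤ L := by rw [hL]; linarith
  have hL0 : (0:ℝ) < L := by linarith
  have hLne : L ≠ 0 := ne_of_gt hL0
  have hpi : 0 < π := Real.pi_pos
  set a := π / (2 * L) with ha
  have ha0 : 0 < a := by positivity
  have ha2 : a < π / 2 := by
    rw [ha]
    apply div_lt_div_of_pos_left hpi (by norm_num) (by linarith)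
  have hcos : 0 < Real.cos a := Real.cos_pos_of_mem_Ioo ⟨by linarith, ha2⟩
  clear_value a
  have hpi_eq : π = 2 * a * L := by rw [ha]; field_simp
  have key : ((4:ℝ) * n + 3) * a = π / 2 := by
    rw [ha, hL]; field_simp
  -- rewrite the arguments
  have harg1 : ∀ l : ℕ, (2 * (l:ℝ) * π - π / 2) / L = 4 * l * a - a := by
    intro l; rw [hpi_eq]; field_simp; ring
  have harg2 : ∀ l : ℕ, (2 * (l:ℝ) * π + π / 2) / L = 4 * l * a + a := by
    intro l; rw [hpi_eq]; field_simp; ring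
  have harg0 : (π / 2) / L = a := by rw [hpi_eq]; field_simp
  have h43 : ((4:ℝ) * n + 3) ≠ 0 := by positivity
  have harg3 : (2 * ((n:ℝ) + 1) * π - π / 2) / L = π / 2 := by
    rw [hL]; field_simp; ring
  rw [harg0, harg3, Real.sin_pi_div_two]
  simp only [harg1, harg2]
  -- multiply through by cos a
  have hne := ne_of_gt hcos
  have main : (2 * Real.sin a
      - 2 * ∑ l ∈ Finset.Icc 1 n, Real.sin (4 * l * a - a)
      + 2 * ∑ l ∈ Finset.Icc 1 n, Real.sin (4 * l * a + a) - 1) * Real.cos a = 0 := by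
    have hterm : ∀ x : ℝ, (Real.sin (x + a) - Real.sin (x - a)) * (2 * Real.cos a)
        = Real.sin (x + 2 * a) - Real.sin (x - 2 * a) := by
      intro x
      rw [Real.sin_add, Real.sin_sub, Real.sin_add, Real.sin_sub, Real.sin_two_mul]
      ring
    have htel : ∑ l ∈ Finset.Icc 1 n,
        (Real.sin (4 * l * a + 2 * a) - Real.sin (4 * l * a - 2 * a))
        = Real.sin ((4 * n + 2) * a) - Real.sin (2 * a) := by
      have hsub := Finset.sum_range_sub (fun i : ℕ => Real.sin ((4 * i + 2) * a)) n
      rw [← Finset.Ico_add_one_right_eq_Icc, Finset.sum_Ico_eq_sum_range]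
      have h0 : Real.sin (2 * a) = Real.sin ((4 * ((0:ℕ):ℝ) + 2) * a) := by norm_num
      rw [h0, ← hsub]
      apply Finset.sum_congr rfl
      intro i _
      congr 1 <;> · congr 1; push_cast; ring
    have hsum : (∑ l ∈ Finset.Icc 1 n, Real.sin (4 * l * a + a)
        - ∑ l ∈ Finset.Icc 1 n, Real.sin (4 * l * a - a)) * (2 * Real.cos a)
        = Real.sin ((4 * n + 2) * a) - Real.sin (2 * a) := by
      rw [← Finset.sum_sub_distrib, Finset.sum_mul]
      rw [← htel]
      apply Finset.sum_congr rfl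
      intro l _
      exact hterm (4 * l * a)
    have h42 : ((4:ℝ) * n + 2) * a = π / 2 - a := by linarith [key]
    have hsin42 : Real.sin ((4 * (n:ℝ) + 2) * a) = Real.cos a := by
      rw [h42, Real.sin_pi_div_two_sub]
    have hsin2a : Real.sin (2 * a) = 2 * Real.sin a * Real.cos a := Real.sin_two_mul a
    nlinarith [hsum, hsin42, hsin2a]
  exact (mul_eq_zero.mp main).resolve_right hne
end

section
/- Let L = 5 and define f(φ) = 2sin(φ/L) − sin((2π−φ)/L). Then there exists a unique φ₀ in the open interval (0, 2π) with f(φ₀) = 0, and 1.95 < φ₀ < 1.96. -/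
/-!
Both `φ / 5` and `(2π - φ) / 5` stay in `[0, π / 2]` for `φ ∈ [0, 2π]`, where `sin` is
increasing, so `f` is strictly increasing there and has at most one zero. A zero in
`(1.95, 1.96)` comes from the intermediate value theorem, with the signs of `f 1.95` and `f 1.96`
certified by truncations of the Taylor series of `sin`: for `0 ≤ x ≤ 1` its terms decrease, so
by the alternating series test the partial sums alternately bound `sin x` from below and above.
-/

open Real Set Finset Filter Topology

namespace Real

open scoped Nat

lemma antitone_sin_taylor_term {x : ℝ} (h0 : 0 ≤ x) (h1 : x ≤ 1) :
    Antitone fun n : ℕ => x ^ (2 * n + 1) / (2 * n + 1)! := by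
  refine antitone_nat_of_succ_le fun n => ?_
  have hpow : x ^ (2 * (n + 1) + 1) ≤ x ^ (2 * n + 1) :=
    pow_le_pow_of_le_one h0 h1 (by omega)
  have hfact : ((2 * n + 1)! : ℝ) ≤ (2 * (n + 1) + 1)! := by
    exact_mod_cast Nat.factorial_le (by omega)
  gcongr

lemma tendsto_sum_sin_taylor (x : ℝ) :
    Tendsto (fun n => ∑ i ∈ range n, (-1) ^ i * (x ^ (2 * i + 1) / (2 * i + 1)!)) atTop
      (𝓝 (sin x)) := by
  simpa only [mul_div_assoc] using (hasSum_sin x).tendsto_sum_nat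

lemma sum_sin_taylor_le_sin {x : ℝ} (h0 : 0 ≤ x) (h1 : x ≤ 1) (k : ℕ) :
    ∑ i ∈ range (2 * k), (-1) ^ i * (x ^ (2 * i + 1) / (2 * i + 1)!) ≤ sin x :=
  (antitone_sin_taylor_term h0 h1).alternating_series_le_tendsto (tendsto_sum_sin_taylor x) k

lemma sin_le_sum_sin_taylor {x : ℝ} (h0 : 0 ≤ x) (h1 : x ≤ 1) (k : ℕ) :
    sin x ≤ ∑ i ∈ range (2 * k + 1), (-1) ^ i * (x ^ (2 * i + 1) / (2 * i + 1)!) :=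
  (antitone_sin_taylor_term h0 h1).tendsto_le_alternating_series (tendsto_sum_sin_taylor x) k

end Real

noncomputable def fluxCondition (L φ : ℝ) : ℝ :=
  2 * sin (φ / L) - sin ((2 * π - φ) / L)

lemma continuous_fluxCondition (L : ℝ) : Continuous (fluxCondition L) := by
  unfold fluxCondition
  fun_prop

lemma strictMonoOn_fluxCondition {L : ℝ} (hL : 4 ≤ L) :
    StrictMonoOn (fluxCondition L) (Icc 0 (2 * π)) := by
  have hL0 : 0 < L := by linarith
  have hquarter : 2 * π / L ≤ π / 2 := by
    rw [div_le_iff₀ hL0]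
    nlinarith [pi_pos]
  have hrange {t : ℝ} (ht : t ∈ Icc 0 (2 * π)) : t / L ∈ Icc (-(π / 2)) (π / 2) := by
    have hle : t / L ≤ 2 * π / L := div_le_div_of_nonneg_right ht.2 hL0.le
    exact ⟨by linarith [pi_pos, div_nonneg ht.1 hL0.le], by linarith⟩
  have hreflect {t : ℝ} (ht : t ∈ Icc 0 (2 * π)) : 2 * π - t ∈ Icc 0 (2 * π) :=
    ⟨by linarith [ht.2], by linarith [ht.1]⟩
  intro a ha b hb hab
  have hsin : sin (a / L) < sin (b / L) :=
    strictMonoOn_sin (hrange ha) (hrange hb) (div_lt_div_of_pos_right hab hL0)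
  have hsin' : sin ((2 * π - b) / L) < sin ((2 * π - a) / L) :=
    strictMonoOn_sin (hrange (hreflect hb)) (hrange (hreflect ha))
      (div_lt_div_of_pos_right (by linarith) hL0)
  unfold fluxCondition
  linarith

lemma fluxCondition_five_neg : fluxCondition 5 1.95 < 0 := by
  have hsmall : sin (1.95 / 5) ≤ 0.3803 := by
    refine (sin_le_sum_sin_taylor (by norm_num) (by norm_num) 1).trans ?_
    norm_num [Finset.sum_range_succ, Nat.factorial]
  have hlarge : 0.7617 ≤ sin 0.866 := by
    refine le_trans ?_ (sum_sin_taylor_le_sin (by norm_num) (by norm_num) 2)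
    norm_num [Finset.sum_range_succ, Nat.factorial]
  have hmono : sin 0.866 ≤ sin ((2 * π - 1.95) / 5) :=
    sin_le_sin_of_le_of_le_pi_div_two (by linarith [pi_pos]) (by linarith [pi_pos])
      (by linarith [pi_gt_d4])
  unfold fluxCondition
  linarith

lemma fluxCondition_five_pos : 0 < fluxCondition 5 1.96 := by
  have hsmall : 0.382 ≤ sin (1.96 / 5) := by
    refine le_trans ?_ (sum_sin_taylor_le_sin (by norm_num) (by norm_num) 2)
    norm_num [Finset.sum_range_succ, Nat.factorial]
  have hlarge : sin 0.8647 ≤ 0.7610 := by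
    refine (sin_le_sum_sin_taylor (by norm_num) (by norm_num) 1).trans ?_
    norm_num [Finset.sum_range_succ, Nat.factorial]
  have hmono : sin ((2 * π - 1.96) / 5) ≤ sin 0.8647 :=
    sin_le_sin_of_le_of_le_pi_div_two (by linarith [pi_gt_three]) (by linarith [pi_gt_three])
      (by linarith [pi_lt_d4])
  unfold fluxCondition
  linarith

theorem stmt_6 (L : ℝ) (hL : L = 5)
    (f : ℝ → ℝ) (hf : ∀ φ, f φ = 2 * Real.sin (φ / L) - Real.sin ((2 * π - φ) / L)) :
    ∃ φ₀ ∈ Set.Ioo (0 : ℝ) (2 * π), f φ₀ = 0 ∧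
      (∀ ψ ∈ Set.Ioo (0 : ℝ) (2 * π), f ψ = 0 → ψ = φ₀) ∧
      1.95 < φ₀ ∧ φ₀ < 1.96 := by
  subst hL
  obtain rfl : f = fluxCondition 5 := funext hf
  obtain ⟨φ₀, ⟨hlo, hhi⟩, hzero⟩ :=
    intermediate_value_Ioo (by norm_num) (continuous_fluxCondition 5).continuousOn
      ⟨fluxCondition_five_neg, fluxCondition_five_pos⟩
  have hmem : φ₀ ∈ Ioo 0 (2 * π) := ⟨by linarith, by linarith [pi_gt_three]⟩
  refine ⟨φ₀, hmem, hzero, fun ψ hψ hψzero => ?_, hlo, hhi⟩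
  exact (strictMonoOn_fluxCondition (by norm_num)).injOn (Ioo_subset_Icc_self hψ)
    (Ioo_subset_Icc_self hmem) (hψzero.trans hzero.symm)
end
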